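/- A point [v] ∈ ℙ(H) is a critical point of the function ‖μ‖² (the squared norm of the momentum map for a compact group K ⊆ SU(H)) if and only if v is an eigenvector of the operator μ([v]), i.e. μ([v])·v = λv for some scalar λ. -/

import Mathlib

/-!
Put `Tᵢ = ξᵢ / 2i`; these are self-adjoint because the `ξᵢ` are skew-adjoint, and
`μ_{ξᵢ}([v])` is the Rayleigh quotient `Rᵢ(v) = re ⟪Tᵢ v, v⟫ / ‖v‖²`, whose real derivative at
`v ≠ 0` is `h ↦ (2 / ‖v‖²) re ⟪Tᵢ v - Rᵢ(v) v, h⟫`. Summing, the derivative of `‖μ‖² = Σ Rᵢ²`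
is `h ↦ (4 / ‖v‖²) re ⟪S v - R_S(v) v, h⟫` with `S = Σ Rᵢ(v) Tᵢ = μ([v]) / 2i`, since the Rayleigh
quotient is linear in the operator and so `R_S(v) = Σ Rᵢ(v)²`. Thus `v` is critical iff
`S v = R_S(v) v`, and this is the eigenvector condition because an eigenvalue of the self-adjoint
`S` at `v` can only be `R_S(v)`.
-/

open scoped BigOperators ComplexInnerProductSpace

/-- The real coefficients `μ_{ξᵢ}([v]) = (1/(2i))⟨v, ξᵢ v⟩/⟨v,v⟩` of the momentum map
of `K ⊆ SU(H)` in an orthonormal basis `ξ` of its Lie algebra `𝔨`. -/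
noncomputable def momentumCoeff {n d : ℕ}
    (ξ : Fin d → (EuclideanSpace ℂ (Fin n) →ₗ[ℂ] EuclideanSpace ℂ (Fin n)))
    (v : EuclideanSpace ℂ (Fin n)) (i : Fin d) : ℝ :=
  (⟪v, ξ i v⟫ / (2 * Complex.I * ⟪v, v⟫)).re

/-- The squared norm `‖μ([v])‖² = Σᵢ μ_{ξᵢ}([v])²` of the momentum map, as a
(scale-invariant) function on `H ∖ {0}`, extended to all of `H`. -/
noncomputable def momentumNormSq {n d : ℕ}
    (ξ : Fin d → (EuclideanSpace ℂ (Fin n) →ₗ[ℂ] EuclideanSpace ℂ (Fin n)))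
    (v : EuclideanSpace ℂ (Fin n)) : ℝ :=
  ∑ i : Fin d, (momentumCoeff ξ v i) ^ 2

open RCLike ContinuousLinearMap

open scoped InnerProductSpace

section RayleighQuotient

variable {𝕜 E ι : Type*} [RCLike 𝕜] [NormedAddCommGroup E] [InnerProductSpace 𝕜 E]

theorem ContinuousLinearMap.rayleighQuotient_sum_ofReal_smul (s : Finset ι) (c : ι → ℝ)
    (T : ι → E →L[𝕜] E) (x : E) :
    (∑ i ∈ s, (c i : 𝕜) • T i).rayleighQuotient x = ∑ i ∈ s, c i * (T i).rayleighQuotient x := by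
  simp only [rayleighQuotient, reApplyInnerSelf_apply, sum_apply, FunLike.coe_smul,
    Pi.smul_apply, sum_inner, inner_smul_real_left, map_sum, smul_re, Finset.sum_div,
    mul_div_assoc]

theorem LinearMap.IsSymmetric.exists_apply_eq_smul_iff {S : E →L[𝕜] E}
    (hS : (S : E →ₗ[𝕜] E).IsSymmetric) (x : E) :
    (∃ c : 𝕜, S x = c • x) ↔ S x = (S.rayleighQuotient x : 𝕜) • x := by
  refine ⟨fun ⟨c, hc⟩ => ?_, fun h => ⟨_, h⟩⟩
  rcases eq_or_ne x 0 with rfl | hx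
  · simp
  have hx' : (‖x‖ : 𝕜) ≠ 0 := by simpa using hx
  suffices c = (S.rayleighQuotient x : 𝕜) by rw [hc, this]
  have hinner : ⟪S x, x⟫_𝕜 = c * ‖x‖ ^ 2 := by
    rw [hS.apply_clm, hc, inner_smul_right, inner_self_eq_norm_sq_to_K]
  rw [rayleighQuotient, ofReal_div, hS.coe_reApplyInnerSelf_apply, hinner]
  push_cast
  field_simp

variable [Fintype ι] {T : ι → E →L[𝕜] E}

/-- With `T i = ξ i / 2i`, this is `μ([x]) / 2i`. -/
noncomputable def momentOperator (T : ι → E →L[𝕜] E) (x : E) : E →L[𝕜] E :=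
  ∑ i, ((T i).rayleighQuotient x : 𝕜) • T i

theorem rayleighQuotient_momentOperator (x : E) :
    (momentOperator T x).rayleighQuotient x = ∑ i, (T i).rayleighQuotient x ^ 2 := by
  simp only [momentOperator, rayleighQuotient_sum_ofReal_smul, sq]

theorem isSymmetric_momentOperator (hT : ∀ i, (T i : E →ₗ[𝕜] E).IsSymmetric) (x : E) :
    (momentOperator T x : E →ₗ[𝕜] E).IsSymmetric := by
  rw [momentOperator, toLinearMap_sum]
  exact LinearMap.isSymmetric_sum _ fun i _ => (hT i).smul (conj_ofReal _)

end RayleighQuotient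

section Derivative

variable {𝕜 E ι : Type*} [RCLike 𝕜] [NormedAddCommGroup E] [InnerProductSpace 𝕜 E]
  [NormedSpace ℝ E] [IsScalarTower ℝ 𝕜 E]

variable (𝕜) in
noncomputable def reInnerSL (u : E) : E →L[ℝ] ℝ :=
  reCLM.comp ((innerSL 𝕜 u).restrictScalars ℝ)

theorem reInnerSL_apply (u h : E) : reInnerSL 𝕜 u h = re ⟪u, h⟫_𝕜 := rfl

theorem reInnerSL_eq_zero_iff {u : E} : reInnerSL 𝕜 u = 0 ↔ u = 0 := by
  refine ⟨fun h => ?_, fun h => by ext; simp [reInnerSL_apply, h]⟩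
  simpa [reInnerSL_apply, inner_self_eq_norm_sq] using congrArg (fun f => f u) h

theorem LinearMap.IsSymmetric.hasFDerivAt_reApplyInnerSelf {T : E →L[𝕜] E}
    (hT : (T : E →ₗ[𝕜] E).IsSymmetric) (x : E) :
    HasFDerivAt T.reApplyInnerSelf (2 • reInnerSL 𝕜 (T x)) x := by
  rw [show T.reApplyInnerSelf = fun y => re ⟪T y, y⟫_𝕜 from funext T.reApplyInnerSelf_apply]
  refine (reCLM.hasFDerivAt.comp x (((T.restrictScalars ℝ).hasFDerivAt).inner 𝕜
    (hasFDerivAt_id x))).congr_fderiv ?_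
  ext h
  simp only [ContinuousLinearMap.comp_apply, ContinuousLinearMap.prod_apply,
    coe_restrictScalars', ContinuousLinearMap.id_apply, id_eq, fderivInnerCLM_apply,
    reCLM_apply, map_add, two_smul, FunLike.coe_add, Pi.add_apply, reInnerSL_apply]
  rw [hT.apply_clm h x, inner_re_symm h]

theorem hasFDerivAt_norm_sq_reInnerSL (x : E) :
    HasFDerivAt (fun y : E => ‖y‖ ^ 2) (2 • reInnerSL 𝕜 x) x := by
  have h := (LinearMap.IsSymmetric.id (𝕜 := 𝕜) (E := E)).hasFDerivAt_reApplyInnerSelf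
    (T := ContinuousLinearMap.id 𝕜 E) x
  rwa [show (fun y : E => ‖y‖ ^ 2) = (ContinuousLinearMap.id 𝕜 E).reApplyInnerSelf by
    funext y
    simp [reApplyInnerSelf_apply]]

theorem LinearMap.IsSymmetric.hasFDerivAt_rayleighQuotient {T : E →L[𝕜] E}
    (hT : (T : E →ₗ[𝕜] E).IsSymmetric) {x : E} (hx : x ≠ 0) :
    HasFDerivAt T.rayleighQuotient
      ((2 / ‖x‖ ^ 2) • reInnerSL 𝕜 (T x - (T.rayleighQuotient x : 𝕜) • x)) x := by
  have hx2 : ‖x‖ ^ 2 ≠ 0 := by positivity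
  refine ((hT.hasFDerivAt_reApplyInnerSelf x).mul ((hasDerivAt_inv hx2).comp_hasFDerivAt x
    (hasFDerivAt_norm_sq_reInnerSL (𝕜 := 𝕜) x))).congr_fderiv ?_
  ext h
  simp only [FunLike.coe_add, FunLike.coe_smul, Pi.add_apply, Pi.smul_apply, reInnerSL_apply,
    inner_sub_left, inner_smul_real_left, smul_eq_mul, smul_re, map_sub, Function.comp_apply,
    nsmul_eq_mul, Pi.mul_apply, Pi.ofNat_apply, Nat.cast_ofNat, rayleighQuotient]
  field_simp
  ring

variable [Fintype ι] {T : ι → E →L[𝕜] E}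

theorem hasFDerivAt_sum_sq_rayleighQuotient (hT : ∀ i, (T i : E →ₗ[𝕜] E).IsSymmetric)
    {x : E} (hx : x ≠ 0) :
    HasFDerivAt (fun y => ∑ i, (T i).rayleighQuotient y ^ 2)
      ((4 / ‖x‖ ^ 2) • reInnerSL 𝕜
        (momentOperator T x x - ((momentOperator T x).rayleighQuotient x : 𝕜) • x)) x := by
  refine (HasFDerivAt.fun_sum fun i _ =>
    ((hT i).hasFDerivAt_rayleighQuotient hx).pow 2).congr_fderiv ?_
  ext h
  rw [rayleighQuotient_momentOperator]
  -- the real scalars must leave the inner product before `map_sum` can split the cast sum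
  simp only [momentOperator, FunLike.coe_smul, Pi.smul_apply, sum_apply, reInnerSL_apply,
    inner_sub_left, sum_inner, inner_smul_real_left, map_sub, smul_re, smul_eq_mul, nsmul_eq_mul]
  simp only [map_sum, smul_re, Finset.sum_mul, ← Finset.sum_sub_distrib, Finset.mul_sum]
  refine Finset.sum_congr rfl fun i _ => ?_
  push_cast
  ring

theorem fderiv_sum_sq_rayleighQuotient_eq_zero_iff (hT : ∀ i, (T i : E →ₗ[𝕜] E).IsSymmetric)
    {x : E} (hx : x ≠ 0) :
    fderiv ℝ (fun y => ∑ i, (T i).rayleighQuotient y ^ 2) x = 0 ↔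
      ∃ c : 𝕜, momentOperator T x x = c • x := by
  rw [(hasFDerivAt_sum_sq_rayleighQuotient hT hx).fderiv, smul_eq_zero_iff_right (by positivity),
    reInnerSL_eq_zero_iff, sub_eq_zero, (isSymmetric_momentOperator hT x).exists_apply_eq_smul_iff]

end Derivative

theorem LinearMap.isSymmetric_smul_of_skew {E : Type*} [NormedAddCommGroup E]
    [InnerProductSpace ℂ E] {A : E →ₗ[ℂ] E} (hA : ∀ x y, ⟪A x, y⟫ = -⟪x, A y⟫) {c : ℂ}
    (hc : (starRingEnd ℂ) c = -c) :
    (c • A).IsSymmetric := by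
  intro x y
  simp [inner_smul_left, inner_smul_right, hA, hc]

theorem momentumCoeff_eq_rayleighQuotient {n d : ℕ}
    (ξ : Fin d → (EuclideanSpace ℂ (Fin n) →ₗ[ℂ] EuclideanSpace ℂ (Fin n)))
    (v : EuclideanSpace ℂ (Fin n)) (i : Fin d) :
    momentumCoeff ξ v i =
      (LinearMap.toContinuousLinearMap ((2 * Complex.I)⁻¹ • ξ i)).rayleighQuotient v := by
  have hvv : ⟪v, v⟫ = ((‖v‖ ^ 2 : ℝ) : ℂ) := by simp [inner_self_eq_norm_sq_to_K]
  rw [rayleighQuotient, reApplyInnerSelf_apply, inner_re_symm,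
    LinearMap.coe_toContinuousLinearMap', LinearMap.smul_apply, inner_smul_right, momentumCoeff,
    hvv, ← div_div, Complex.div_ofReal_re, div_eq_inv_mul ⟪v, ξ i v⟫]
  rfl

theorem critical_point_of_momentum_norm_sq_iff_eigenvector_general
    {n d : ℕ}
    (ξ : Fin d → (EuclideanSpace ℂ (Fin n) →ₗ[ℂ] EuclideanSpace ℂ (Fin n)))
    (hanti : ∀ (i : Fin d) (x y : EuclideanSpace ℂ (Fin n)),
      ⟪ξ i x, y⟫ = -⟪x, ξ i y⟫)
    (v : EuclideanSpace ℂ (Fin n)) (hv : v ≠ 0) :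
    fderiv ℝ (momentumNormSq ξ) v = 0 ↔
      ∃ lam : ℂ, (∑ i : Fin d, (momentumCoeff ξ v i : ℂ) • ξ i v) = lam • v := by
  set T : Fin d → EuclideanSpace ℂ (Fin n) →L[ℂ] EuclideanSpace ℂ (Fin n) :=
    fun i => LinearMap.toContinuousLinearMap ((2 * Complex.I)⁻¹ • ξ i)
  have hT (i : Fin d) : (T i : EuclideanSpace ℂ (Fin n) →ₗ[ℂ] _).IsSymmetric :=
    LinearMap.isSymmetric_smul_of_skew (hanti i) (by simp [map_ofNat])
  have hnormSq : momentumNormSq ξ = fun y => ∑ i, (T i).rayleighQuotient y ^ 2 := by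
    funext y
    simp only [momentumNormSq, momentumCoeff_eq_rayleighQuotient, T]
  have hmoment :
      ∑ i, (momentumCoeff ξ v i : ℂ) • ξ i v = (2 * Complex.I) • momentOperator T v v := by
    simp only [momentOperator, T, ← momentumCoeff_eq_rayleighQuotient, sum_apply,
      FunLike.coe_smul, Pi.smul_apply, LinearMap.coe_toContinuousLinearMap',
      LinearMap.smul_apply, Finset.smul_sum, smul_smul]
    refine Finset.sum_congr rfl fun i _ => ?_
    rw [mul_left_comm, mul_inv_cancel₀ (by simp), mul_one]
    rfl
  have hspan (u : EuclideanSpace ℂ (Fin n)) : (∃ c : ℂ, u = c • v) ↔ u ∈ ℂ ∙ v := by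
    simp [Submodule.mem_span_singleton, eq_comm]
  rw [hnormSq, fderiv_sum_sq_rayleighQuotient_eq_zero_iff hT hv, hmoment, hspan, hspan]
  exact (Submodule.smul_mem_iff _ (by simp)).symm

/-- Let `K ⊆ SU(H)` be compact with Lie algebra `𝔨` spanned by the
orthonormal (w.r.t. `⟨ξ,ζ⟩ = −Tr(ξζ)`) anti-Hermitian operators `ξ i`.  A point
`[v] ∈ ℙ(H)` is a critical point of `‖μ‖²` (equivalently, since `‖μ‖²` is
scale-invariant, `v ≠ 0` is a critical point of the function `v ↦ ‖μ([v])‖²` on `H`)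
if and only if `v` is an eigenvector of the anti-Hermitian operator
`μ([v]) = Σᵢ μ_{ξᵢ}([v]) ξᵢ ∈ 𝔨`, i.e. `μ([v])·v = λ v` for some scalar `λ`. -/
theorem critical_point_of_momentum_norm_sq_iff_eigenvector
    {n d : ℕ}
    (ξ : Fin d → (EuclideanSpace ℂ (Fin n) →ₗ[ℂ] EuclideanSpace ℂ (Fin n)))
    (hanti : ∀ (i : Fin d) (x y : EuclideanSpace ℂ (Fin n)),
      ⟪ξ i x, y⟫ = -⟪x, ξ i y⟫)
    (horth : ∀ i j : Fin d,
      -(LinearMap.trace ℂ _ ((ξ i) ∘ₗ (ξ j))) = if i = j then 1 else 0)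
    (v : EuclideanSpace ℂ (Fin n)) (hv : v ≠ 0) :
    fderiv ℝ (momentumNormSq ξ) v = 0 ↔
      ∃ lam : ℂ, (∑ i : Fin d, (momentumCoeff ξ v i : ℂ) • ξ i v) = lam • v :=
  critical_point_of_momentum_norm_sq_iff_eigenvector_general ξ hanti v hv
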